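/- For any two transformation data (f, γ₁, γ₂, γ₃) and (f̄, γ̄₁, γ̄₂, γ̄₃) and any differentiable A : ℝ → ℝ together with B, C₁, C₂ : ℝ → ℝ: applying the transformation rules (t1)–(t4) with (f, γ₁, γ₂, γ₃) and then applying them with (f̄, γ̄₁, γ̄₂, γ̄₃) produces the same quadruple of coefficient functions (including the kinetic coefficient B) as the single application with the composite datum (f̄∘f, γ̄₁∘f + γ₁, γ̄₂∘f + γ₂, γ̄₃∘f + γ₃); moreover the identity datum acts trivially. Hence the transformation rule (t2) for the kinetic coupling B, together with (t1), (t3), (t4), defines a consistent group action on quadruples (A, B, C₁, C₂). -/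

import Mathlib

/-- Transformation rule (t1) for the non-minimal coupling coefficient `A`:
`Ā(f x) = exp(−(n−2)·γ₁ x)·A x`. -/
noncomputable def transA (n : ℕ) (f : ℝ ≃ ℝ) (γ₁ A : ℝ → ℝ) : ℝ → ℝ :=
  fun y => Real.exp (-((n : ℝ) - 2) * γ₁ (f.symm y)) * A (f.symm y)

/-- Transformation rule (t3) for the coefficient `C₁`:
`C̄₁(f x)·f' x = exp(−(n−2)·γ₁ x)·(C₁ x + A x·((n−1)/2·γ₂' x + (n−3)/2·γ₃' x))`. -/
noncomputable def transC1 (n : ℕ) (f : ℝ ≃ ℝ) (γ₁ γ₂ γ₃ A C₁ : ℝ → ℝ) : ℝ → ℝ :=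
  fun y => Real.exp (-((n : ℝ) - 2) * γ₁ (f.symm y)) *
    (C₁ (f.symm y) + A (f.symm y) *
      (((n : ℝ) - 1) / 2 * deriv γ₂ (f.symm y) + ((n : ℝ) - 3) / 2 * deriv γ₃ (f.symm y)))
    / deriv (⇑f) (f.symm y)

/-- Transformation rule (t4) for the coefficient `C₂`:
`C̄₂(f x)·f' x = exp(−(n−2)·γ₁ x)·(C₂ x + A x·((n−1)·γ₂' x − γ₃' x))`. -/
noncomputable def transC2 (n : ℕ) (f : ℝ ≃ ℝ) (γ₁ γ₂ γ₃ A C₂ : ℝ → ℝ) : ℝ → ℝ :=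
  fun y => Real.exp (-((n : ℝ) - 2) * γ₁ (f.symm y)) *
    (C₂ (f.symm y) + A (f.symm y) *
      (((n : ℝ) - 1) * deriv γ₂ (f.symm y) - deriv γ₃ (f.symm y)))
    / deriv (⇑f) (f.symm y)

/-- Transformation rule (t2) for the kinetic coupling `B`:
`B̄(f x)·(f' x)² = exp(−(n−2)·γ₁ x)·( B x
  + (n−1)·( n·A·γ₂'·γ₃' − A·(γ₂')² − A·(γ₃')² + A'·(γ₂' + γ₃') − (n−2)·A·γ₁'·(γ₂' + γ₃') )
  + C₁·( −2n·γ₁' + 2(n+1)·γ₂' − 2·γ₃' ) + C₂·( 2·γ₁' − (n+3)·γ₂' + (n+1)·γ₃' ) )`. -/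
noncomputable def transB (n : ℕ) (f : ℝ ≃ ℝ) (γ₁ γ₂ γ₃ A B C₁ C₂ : ℝ → ℝ) : ℝ → ℝ :=
  fun y =>
    Real.exp (-((n : ℝ) - 2) * γ₁ (f.symm y)) *
      (B (f.symm y)
        + ((n : ℝ) - 1) *
          ((n : ℝ) * A (f.symm y) * deriv γ₂ (f.symm y) * deriv γ₃ (f.symm y)
            - A (f.symm y) * (deriv γ₂ (f.symm y)) ^ 2
            - A (f.symm y) * (deriv γ₃ (f.symm y)) ^ 2
            + deriv A (f.symm y) * (deriv γ₂ (f.symm y) + deriv γ₃ (f.symm y))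
            - ((n : ℝ) - 2) * A (f.symm y) * deriv γ₁ (f.symm y)
              * (deriv γ₂ (f.symm y) + deriv γ₃ (f.symm y)))
        + C₁ (f.symm y) * (-(2 * (n : ℝ)) * deriv γ₁ (f.symm y)
            + 2 * ((n : ℝ) + 1) * deriv γ₂ (f.symm y) - 2 * deriv γ₃ (f.symm y))
        + C₂ (f.symm y) * (2 * deriv γ₁ (f.symm y)
            - ((n : ℝ) + 3) * deriv γ₂ (f.symm y) + ((n : ℝ) + 1) * deriv γ₃ (f.symm y)))
      / (deriv (⇑f) (f.symm y)) ^ 2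

/-!
Every rule is an explicit expression in `x = f⁻¹ y`, so evaluating both sides at
`y = f̄ (f x)` reduces each identity to one between real numbers. The chain rule gives
`(f̄ ∘ f)' = f̄'(f x) · f'` and `(γ̄ᵢ ∘ f + γᵢ)' = γ̄ᵢ'(f x) · f' + γᵢ'`, the inverse function
rule gives `Ā' (f x) = e^{-(n-2)γ₁} (A' - (n-2) γ₁' A) / f'`, and the exponential factors
multiply; what is left is a rational identity in the nonzero quantity `f'(x)`.
-/

lemma deriv_comp_add {f g γ : ℝ → ℝ} {x : ℝ} (hg : DifferentiableAt ℝ g (f x))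
    (hf : DifferentiableAt ℝ f x) (hγ : DifferentiableAt ℝ γ x) :
    deriv (g ∘ f + γ) x = deriv g (f x) * deriv f x + deriv γ x := by
  rw [deriv_add (hg.comp x hf) hγ, deriv_comp x hg hf]

lemma exp_neg_mul_comp_add (c : ℝ) (f g γ : ℝ → ℝ) (x : ℝ) :
    Real.exp (-c * (g ∘ f + γ) x) = Real.exp (-c * g (f x)) * Real.exp (-c * γ x) := by
  rw [Pi.add_apply, Function.comp_apply, mul_add, Real.exp_add]

section

variable (n : ℕ) {f fb : ℝ ≃ ℝ} {γ₁ γ₂ γ₃ g₁ g₂ g₃ A : ℝ → ℝ}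

lemma transA_apply_apply (x : ℝ) :
    transA n f γ₁ A (f x) = Real.exp (-((n : ℝ) - 2) * γ₁ x) * A x := by
  simp [transA]

lemma transC1_apply_apply (C₁ : ℝ → ℝ) (x : ℝ) :
    transC1 n f γ₁ γ₂ γ₃ A C₁ (f x) = Real.exp (-((n : ℝ) - 2) * γ₁ x) *
      (C₁ x + A x * (((n : ℝ) - 1) / 2 * deriv γ₂ x + ((n : ℝ) - 3) / 2 * deriv γ₃ x))
      / deriv f x := by
  simp [transC1]

lemma transC2_apply_apply (C₂ : ℝ → ℝ) (x : ℝ) :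
    transC2 n f γ₁ γ₂ γ₃ A C₂ (f x) = Real.exp (-((n : ℝ) - 2) * γ₁ x) *
      (C₂ x + A x * (((n : ℝ) - 1) * deriv γ₂ x - deriv γ₃ x)) / deriv f x := by
  simp [transC2]

lemma transB_apply_apply (B C₁ C₂ : ℝ → ℝ) (x : ℝ) :
    transB n f γ₁ γ₂ γ₃ A B C₁ C₂ (f x) =
      Real.exp (-((n : ℝ) - 2) * γ₁ x) *
        (B x + ((n : ℝ) - 1) *
            ((n : ℝ) * A x * deriv γ₂ x * deriv γ₃ x - A x * deriv γ₂ x ^ 2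
              - A x * deriv γ₃ x ^ 2 + deriv A x * (deriv γ₂ x + deriv γ₃ x)
              - ((n : ℝ) - 2) * A x * deriv γ₁ x * (deriv γ₂ x + deriv γ₃ x))
          + C₁ x * (-(2 * (n : ℝ)) * deriv γ₁ x + 2 * ((n : ℝ) + 1) * deriv γ₂ x
              - 2 * deriv γ₃ x)
          + C₂ x * (2 * deriv γ₁ x - ((n : ℝ) + 3) * deriv γ₂ x
              + ((n : ℝ) + 1) * deriv γ₃ x))
        / deriv f x ^ 2 := by
  simp [transB]

lemma deriv_transA_apply {x : ℝ} (hf : DifferentiableAt ℝ f x) (hf' : deriv f x ≠ 0)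
    (hfsymm : ContinuousAt f.symm (f x)) (hγ₁ : DifferentiableAt ℝ γ₁ x)
    (hA : DifferentiableAt ℝ A x) :
    deriv (transA n f γ₁ A) (f x) = Real.exp (-((n : ℝ) - 2) * γ₁ x) *
      (deriv A x - ((n : ℝ) - 2) * deriv γ₁ x * A x) / deriv f x := by
  have hsymm : HasDerivAt f.symm (deriv f x)⁻¹ (f x) :=
    .of_local_left_inverse hfsymm (by simpa using hf.hasDerivAt) hf'
      (.of_forall f.apply_symm_apply)
  have hrescaled : HasDerivAt (fun x => Real.exp (-((n : ℝ) - 2) * γ₁ x) * A x)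
      (Real.exp (-((n : ℝ) - 2) * γ₁ x) * (-((n : ℝ) - 2) * deriv γ₁ x) * A x
        + Real.exp (-((n : ℝ) - 2) * γ₁ x) * deriv A x) x :=
    (hγ₁.hasDerivAt.const_mul _).exp.mul hA.hasDerivAt
  refine (hrescaled.comp_of_eq (f x) hsymm (f.symm_apply_apply x).symm).deriv.trans ?_
  ring

lemma transA_trans :
    transA n fb g₁ (transA n f γ₁ A) = transA n (f.trans fb) (g₁ ∘ f + γ₁) A := by
  ext y
  obtain ⟨x, rfl⟩ := (f.trans fb).surjective y
  rw [transA_apply_apply, Equiv.trans_apply, transA_apply_apply, transA_apply_apply,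
    exp_neg_mul_comp_add]
  ring

lemma transC1_trans (hf : Differentiable ℝ f) (hf' : ∀ x, deriv f x ≠ 0)
    (hfb : Differentiable ℝ fb) (hγ₂ : Differentiable ℝ γ₂) (hγ₃ : Differentiable ℝ γ₃)
    (hg₂ : Differentiable ℝ g₂) (hg₃ : Differentiable ℝ g₃) (C₁ : ℝ → ℝ) :
    transC1 n fb g₁ g₂ g₃ (transA n f γ₁ A) (transC1 n f γ₁ γ₂ γ₃ A C₁)
      = transC1 n (f.trans fb) (g₁ ∘ f + γ₁) (g₂ ∘ f + γ₂) (g₃ ∘ f + γ₃) A C₁ := by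
  ext y
  obtain ⟨x, rfl⟩ := (f.trans fb).surjective y
  rw [transC1_apply_apply, Equiv.trans_apply, transC1_apply_apply, transC1_apply_apply,
    transA_apply_apply, exp_neg_mul_comp_add, Equiv.coe_trans, deriv_comp x (hfb _) (hf x),
    deriv_comp_add (hg₂ _) (hf x) (hγ₂ x), deriv_comp_add (hg₃ _) (hf x) (hγ₃ x)]
  field_simp [hf' x]
  ring

lemma transC2_trans (hf : Differentiable ℝ f) (hf' : ∀ x, deriv f x ≠ 0)
    (hfb : Differentiable ℝ fb) (hγ₂ : Differentiable ℝ γ₂) (hγ₃ : Differentiable ℝ γ₃)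
    (hg₂ : Differentiable ℝ g₂) (hg₃ : Differentiable ℝ g₃) (C₂ : ℝ → ℝ) :
    transC2 n fb g₁ g₂ g₃ (transA n f γ₁ A) (transC2 n f γ₁ γ₂ γ₃ A C₂)
      = transC2 n (f.trans fb) (g₁ ∘ f + γ₁) (g₂ ∘ f + γ₂) (g₃ ∘ f + γ₃) A C₂ := by
  ext y
  obtain ⟨x, rfl⟩ := (f.trans fb).surjective y
  rw [transC2_apply_apply, Equiv.trans_apply, transC2_apply_apply, transC2_apply_apply,
    transA_apply_apply, exp_neg_mul_comp_add, Equiv.coe_trans, deriv_comp x (hfb _) (hf x),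
    deriv_comp_add (hg₂ _) (hf x) (hγ₂ x), deriv_comp_add (hg₃ _) (hf x) (hγ₃ x)]
  field_simp [hf' x]
  ring

lemma transB_trans (hf : Differentiable ℝ f) (hf' : ∀ x, deriv f x ≠ 0)
    (hfsymm : Continuous f.symm) (hfb : Differentiable ℝ fb)
    (hγ₁ : Differentiable ℝ γ₁) (hγ₂ : Differentiable ℝ γ₂) (hγ₃ : Differentiable ℝ γ₃)
    (hg₁ : Differentiable ℝ g₁) (hg₂ : Differentiable ℝ g₂) (hg₃ : Differentiable ℝ g₃)
    (hA : Differentiable ℝ A) (B C₁ C₂ : ℝ → ℝ) :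
    transB n fb g₁ g₂ g₃ (transA n f γ₁ A) (transB n f γ₁ γ₂ γ₃ A B C₁ C₂)
        (transC1 n f γ₁ γ₂ γ₃ A C₁) (transC2 n f γ₁ γ₂ γ₃ A C₂)
      = transB n (f.trans fb) (g₁ ∘ f + γ₁) (g₂ ∘ f + γ₂) (g₃ ∘ f + γ₃) A B C₁ C₂ := by
  ext y
  obtain ⟨x, rfl⟩ := (f.trans fb).surjective y
  rw [transB_apply_apply, Equiv.trans_apply, transB_apply_apply, transB_apply_apply,
    transC1_apply_apply, transC2_apply_apply, transA_apply_apply,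
    deriv_transA_apply n (hf x) (hf' x) hfsymm.continuousAt (hγ₁ x) (hA x),
    exp_neg_mul_comp_add, Equiv.coe_trans, deriv_comp x (hfb _) (hf x),
    deriv_comp_add (hg₁ _) (hf x) (hγ₁ x), deriv_comp_add (hg₂ _) (hf x) (hγ₂ x),
    deriv_comp_add (hg₃ _) (hf x) (hγ₃ x)]
  field_simp [hf' x]
  ring

lemma transA_refl : transA n (Equiv.refl ℝ) 0 A = A := by
  ext; simp [transA]

lemma transC1_refl (C₁ : ℝ → ℝ) : transC1 n (Equiv.refl ℝ) 0 0 0 A C₁ = C₁ := by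
  ext; simp [transC1]

lemma transC2_refl (C₂ : ℝ → ℝ) : transC2 n (Equiv.refl ℝ) 0 0 0 A C₂ = C₂ := by
  ext; simp [transC2]

lemma transB_refl (B C₁ C₂ : ℝ → ℝ) : transB n (Equiv.refl ℝ) 0 0 0 A B C₁ C₂ = B := by
  ext; simp [transB]

end

theorem transB_group_action_general (n : ℕ)
    (f fb : ℝ ≃ ℝ) (γ₁ γ₂ γ₃ g₁ g₂ g₃ : ℝ → ℝ)
    (hf : Differentiable ℝ ⇑f) (hf' : ∀ x, deriv (⇑f) x ≠ 0)
    (hfsymm : Differentiable ℝ ⇑f.symm)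
    (hfb : Differentiable ℝ ⇑fb)
    (hγ₁ : Differentiable ℝ γ₁) (hγ₂ : Differentiable ℝ γ₂) (hγ₃ : Differentiable ℝ γ₃)
    (hg₁ : Differentiable ℝ g₁) (hg₂ : Differentiable ℝ g₂) (hg₃ : Differentiable ℝ g₃)
    (A B C₁ C₂ : ℝ → ℝ) (hA : Differentiable ℝ A) :
    (transA n fb g₁ (transA n f γ₁ A) = transA n (f.trans fb) (g₁ ∘ ⇑f + γ₁) A ∧
      transB n fb g₁ g₂ g₃ (transA n f γ₁ A) (transB n f γ₁ γ₂ γ₃ A B C₁ C₂)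
          (transC1 n f γ₁ γ₂ γ₃ A C₁) (transC2 n f γ₁ γ₂ γ₃ A C₂)
        = transB n (f.trans fb) (g₁ ∘ ⇑f + γ₁) (g₂ ∘ ⇑f + γ₂) (g₃ ∘ ⇑f + γ₃) A B C₁ C₂ ∧
      transC1 n fb g₁ g₂ g₃ (transA n f γ₁ A) (transC1 n f γ₁ γ₂ γ₃ A C₁)
        = transC1 n (f.trans fb) (g₁ ∘ ⇑f + γ₁) (g₂ ∘ ⇑f + γ₂) (g₃ ∘ ⇑f + γ₃) A C₁ ∧
      transC2 n fb g₁ g₂ g₃ (transA n f γ₁ A) (transC2 n f γ₁ γ₂ γ₃ A C₂)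
        = transC2 n (f.trans fb) (g₁ ∘ ⇑f + γ₁) (g₂ ∘ ⇑f + γ₂) (g₃ ∘ ⇑f + γ₃) A C₂) ∧
    (transA n (Equiv.refl ℝ) 0 A = A ∧
      transB n (Equiv.refl ℝ) 0 0 0 A B C₁ C₂ = B ∧
      transC1 n (Equiv.refl ℝ) 0 0 0 A C₁ = C₁ ∧
      transC2 n (Equiv.refl ℝ) 0 0 0 A C₂ = C₂) :=
  ⟨⟨transA_trans n,
      transB_trans n hf hf' hfsymm.continuous hfb hγ₁ hγ₂ hγ₃ hg₁ hg₂ hg₃ hA B C₁ C₂,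
      transC1_trans n hf hf' hfb hγ₂ hγ₃ hg₂ hg₃ C₁,
      transC2_trans n hf hf' hfb hγ₂ hγ₃ hg₂ hg₃ C₂⟩,
    ⟨transA_refl n, transB_refl n B C₁ C₂, transC1_refl n C₁, transC2_refl n C₂⟩⟩

/-- The transformation rule (t2) for the kinetic coupling `B`, together with
(t1), (t3), (t4), defines a consistent group action on quadruples
`(A, B, C₁, C₂)`: applying the rules with `(f, γ₁, γ₂, γ₃)` and then with
`(f̄, γ̄₁, γ̄₂, γ̄₃)` agrees with the single application of the composite datum
`(f̄∘f, γ̄₁∘f + γ₁, γ̄₂∘f + γ₂, γ̄₃∘f + γ₃)`, and the identity datum acts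
trivially. -/
theorem transB_group_action (n : ℕ) (hn : 3 ≤ n)
    (f fb : ℝ ≃ ℝ) (γ₁ γ₂ γ₃ g₁ g₂ g₃ : ℝ → ℝ)
    (hf : Differentiable ℝ ⇑f) (hf' : ∀ x, deriv (⇑f) x ≠ 0)
    (hfsymm : Differentiable ℝ ⇑f.symm)
    (hfb : Differentiable ℝ ⇑fb) (hfb' : ∀ x, deriv (⇑fb) x ≠ 0)
    (hfbsymm : Differentiable ℝ ⇑fb.symm)
    (hγ₁ : Differentiable ℝ γ₁) (hγ₂ : Differentiable ℝ γ₂) (hγ₃ : Differentiable ℝ γ₃)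
    (hg₁ : Differentiable ℝ g₁) (hg₂ : Differentiable ℝ g₂) (hg₃ : Differentiable ℝ g₃)
    (A B C₁ C₂ : ℝ → ℝ) (hA : Differentiable ℝ A) :
    (transA n fb g₁ (transA n f γ₁ A) = transA n (f.trans fb) (g₁ ∘ ⇑f + γ₁) A ∧
      transB n fb g₁ g₂ g₃ (transA n f γ₁ A) (transB n f γ₁ γ₂ γ₃ A B C₁ C₂)
          (transC1 n f γ₁ γ₂ γ₃ A C₁) (transC2 n f γ₁ γ₂ γ₃ A C₂)
        = transB n (f.trans fb) (g₁ ∘ ⇑f + γ₁) (g₂ ∘ ⇑f + γ₂) (g₃ ∘ ⇑f + γ₃) A B C₁ C₂ ∧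
      transC1 n fb g₁ g₂ g₃ (transA n f γ₁ A) (transC1 n f γ₁ γ₂ γ₃ A C₁)
        = transC1 n (f.trans fb) (g₁ ∘ ⇑f + γ₁) (g₂ ∘ ⇑f + γ₂) (g₃ ∘ ⇑f + γ₃) A C₁ ∧
      transC2 n fb g₁ g₂ g₃ (transA n f γ₁ A) (transC2 n f γ₁ γ₂ γ₃ A C₂)
        = transC2 n (f.trans fb) (g₁ ∘ ⇑f + γ₁) (g₂ ∘ ⇑f + γ₂) (g₃ ∘ ⇑f + γ₃) A C₂) ∧
    (transA n (Equiv.refl ℝ) 0 A = A ∧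
      transB n (Equiv.refl ℝ) 0 0 0 A B C₁ C₂ = B ∧
      transC1 n (Equiv.refl ℝ) 0 0 0 A C₁ = C₁ ∧
      transC2 n (Equiv.refl ℝ) 0 0 0 A C₂ = C₂) :=
  transB_group_action_general n f fb γ₁ γ₂ γ₃ g₁ g₂ g₃ hf hf' hfsymm hfb hγ₁ hγ₂ hγ₃ hg₁ hg₂ hg₃ A B
    C₁ C₂ hA
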